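/- arXiv:2406.12767 — 3 statements merged into one kernel-verified Lean document; each statement's English description precedes it below -/
import Mathlib

section
/- Up to translation of the torus T^2 = R^2/Z^2, there is exactly one geometric triple grid diagram modeled on the unique Tait-colored cubic graph with 4 vertices whose three color classes each form a perfect matching and which is not the disjoint union of theta graphs. Equivalently, the based moduli space M_0(Γ) for this graph (b = 2) is a single point. -/
/-- The torus T² = ℝ²/ℤ². -/
abbrev Torus2 : Type := AddCircle (1 : ℝ) × AddCircle (1 : ℝ)

/-- Red edges of the b = 2 graph: {v₀,v₁}, {v₂,v₃}. -/
def redEdge (i j : Fin 4) : Prop :=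
  (i = 0 ∧ j = 1) ∨ (i = 1 ∧ j = 0) ∨ (i = 2 ∧ j = 3) ∨ (i = 3 ∧ j = 2)

/-- Blue edges of the b = 2 graph: {v₀,v₂}, {v₁,v₃}. -/
def blueEdge (i j : Fin 4) : Prop :=
  (i = 0 ∧ j = 2) ∨ (i = 2 ∧ j = 0) ∨ (i = 1 ∧ j = 3) ∨ (i = 3 ∧ j = 1)

/-- Green edges of the b = 2 graph: {v₀,v₃}, {v₁,v₂}. -/
def greenEdge (i j : Fin 4) : Prop :=
  (i = 0 ∧ j = 3) ∨ (i = 3 ∧ j = 0) ∨ (i = 1 ∧ j = 2) ∨ (i = 2 ∧ j = 1)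

/-!
Sending v₀ to (0,0), the red and blue edges force φ(v₁) = (0,b), φ(v₂) = (a,0), φ(v₃) = (a,b);
the green edges v₁v₂ and v₀v₃ give a = b and a + b = 0, and the blue non-edge v₀v₁ gives b ≠ 0.
So the based diagrams in any G × G are parametrized by the elements of order 2 of G, and the
circle ℝ/ℤ has exactly one, namely 1/2.
-/

namespace AddCircle

variable {𝕜 : Type*} [Field 𝕜] [LinearOrder 𝕜] [IsStrictOrderedRing 𝕜] [FloorRing 𝕜]
  {p : 𝕜} [Fact (0 < p)]

theorem existsUnique_addOrderOf_eq_two : ∃! u : AddCircle p, addOrderOf u = 2 := by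
  refine ⟨↑(p / 2), by exact_mod_cast addOrderOf_period_div (p := p) two_pos, fun u hu => ?_⟩
  obtain ⟨m, hm, hgcd, rfl⟩ := (addOrderOf_eq_pos_iff two_pos).1 hu
  interval_cases m
  · simp at hgcd
  · congr 1; push_cast; ring

end AddCircle

section B2Diagram

variable {G : Type*} [AddCommGroup G]

def IsBasedB2Diagram (φ : Fin 4 → G × G) : Prop :=
  Function.Injective φ ∧
    (∀ i j : Fin 4, i ≠ j → (((φ i).1 = (φ j).1) ↔ redEdge i j)) ∧
    (∀ i j : Fin 4, i ≠ j → (((φ i).2 = (φ j).2) ↔ blueEdge i j)) ∧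
    (∀ i j : Fin 4, i ≠ j →
      (((φ i).1 + (φ i).2 = (φ j).1 + (φ j).2) ↔ greenEdge i j)) ∧
    φ 0 = (0, 0)

def b2Diagram (b : G) : Fin 4 → G × G := ![(0, 0), (0, b), (b, 0), (b, b)]

theorem isBasedB2Diagram_b2Diagram {b : G} (hb : addOrderOf b = 2) :
    IsBasedB2Diagram (b2Diagram b) := by
  obtain ⟨hbb, hb0⟩ := addOrderOf_eq_prime_iff.1 hb
  rw [two_nsmul] at hbb
  have hbb' : b + b ≠ b := by rwa [hbb, ne_comm]
  refine ⟨fun i j hij => ?_, fun i j hij => ?_, fun i j hij => ?_, fun i j hij => ?_, rfl⟩ <;>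
    fin_cases i <;> fin_cases j <;>
    simp_all [b2Diagram, Prod.ext_iff, redEdge, blueEdge, greenEdge, eq_comm (a := (0 : G))]

theorem IsBasedB2Diagram.eq_b2Diagram {φ : Fin 4 → G × G} (h : IsBasedB2Diagram φ) :
    ∃ b : G, addOrderOf b = 2 ∧ φ = b2Diagram b := by
  obtain ⟨-, hr, hb, hg, h0⟩ := h
  have hx1 : (φ 1).1 = 0 := by rw [← (hr 0 1 (by decide)).2 (.inl ⟨rfl, rfl⟩), h0]
  have hy2 : (φ 2).2 = 0 := by rw [← (hb 0 2 (by decide)).2 (.inl ⟨rfl, rfl⟩), h0]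
  have hx3 : (φ 3).1 = (φ 2).1 := ((hr 2 3 (by decide)).2 (.inr (.inr (.inl ⟨rfl, rfl⟩)))).symm
  have hy3 : (φ 3).2 = (φ 1).2 := ((hb 1 3 (by decide)).2 (.inr (.inr (.inl ⟨rfl, rfl⟩)))).symm
  have hg12 : (φ 2).1 = (φ 1).2 := by
    simpa [hx1, hy2] using ((hg 1 2 (by decide)).2 (.inr (.inr (.inl ⟨rfl, rfl⟩)))).symm
  have hg03 : (φ 1).2 + (φ 1).2 = 0 := by
    simpa [h0, hx3, hy3, hg12] using ((hg 0 3 (by decide)).2 (.inl ⟨rfl, rfl⟩)).symm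
  have hy1 : (φ 1).2 ≠ 0 := fun hy =>
    absurd ((hb 0 1 (by decide)).1 (by rw [h0, hy])) (by simp [blueEdge])
  refine ⟨(φ 1).2, addOrderOf_eq_prime_iff.2 ⟨by rwa [two_nsmul], hy1⟩, ?_⟩
  funext i
  fin_cases i
  · exact h0
  · exact Prod.ext hx1 rfl
  · exact Prod.ext hg12 hy2
  · exact Prod.ext (hx3.trans hg12) hy3

theorem isBasedB2Diagram_iff {φ : Fin 4 → G × G} :
    IsBasedB2Diagram φ ↔ ∃ b : G, addOrderOf b = 2 ∧ φ = b2Diagram b :=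
  ⟨IsBasedB2Diagram.eq_b2Diagram, by rintro ⟨b, hb, rfl⟩; exact isBasedB2Diagram_b2Diagram hb⟩

end B2Diagram

/-- There is exactly one based geometric triple grid diagram (the designated vertex v₀
is sent to (0,0)) modeled on the unique Tait-colored cubic graph with 4 vertices whose
color classes are perfect matchings and which is not a union of theta graphs:
the based moduli space 𝓜₀(Γ) for b = 2 is a single point. -/
theorem b2_based_moduli_unique :
    ∃! φ : Fin 4 → Torus2,
      Function.Injective φ ∧
      (∀ i j : Fin 4, i ≠ j → (((φ i).1 = (φ j).1) ↔ redEdge i j)) ∧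
      (∀ i j : Fin 4, i ≠ j → (((φ i).2 = (φ j).2) ↔ blueEdge i j)) ∧
      (∀ i j : Fin 4, i ≠ j →
        (((φ i).1 + (φ i).2 = (φ j).1 + (φ j).2) ↔ greenEdge i j)) ∧
      φ 0 = (0, 0) := by
  change ∃! φ : Fin 4 → Torus2, IsBasedB2Diagram φ
  obtain ⟨h, hh, huniq⟩ := AddCircle.existsUnique_addOrderOf_eq_two (p := (1 : ℝ))
  refine ⟨b2Diagram h, isBasedB2Diagram_iff.2 ⟨h, hh, rfl⟩, fun φ hφ => ?_⟩
  obtain ⟨b, hb, rfl⟩ := isBasedB2Diagram_iff.1 hφ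
  rw [huniq b hb]
end

section
/- Let x ∈ C^1(Γ,T^2) be an exact 1-cochain (x = d_T φ for some φ: V(Γ) → T^2) and let S ⊆ C^1(Γ,T^2) be the subgroup of cochains valued in S^1×{0} on red edges, {0}×S^1 on blue edges, and the diagonal circle on green edges. Then x ∈ S if and only if there exist a lift x̃ ∈ Im(d_R) ⊆ C^1(Γ,R^2) of some representative and an integral cochain ρ ∈ C^1(Γ,Z^2) representing a class of H^1(Γ,Z^2) such that x̃ + ρ lies in the linear slope subspace S̃ ⊆ C^1(Γ,R^2). -/
/-- Slope condition in ℝ² for a color (0 = red: ℝ×{0}, 1 = blue: {0}×ℝ,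
2 = green: the diagonal {(t,t)}). -/
def slopeCondR : Fin 3 → ℝ × ℝ → Prop
  | 0 => fun v => v.2 = 0
  | 1 => fun v => v.1 = 0
  | 2 => fun v => v.1 = v.2

/-- Slope condition in T² for a color (0 = red: S¹×{0}, 1 = blue: {0}×S¹,
2 = green: the diagonal circle). -/
def slopeCondT : Fin 3 → Torus2 → Prop
  | 0 => fun v => v.2 = 0
  | 1 => fun v => v.1 = 0
  | 2 => fun v => v.1 = v.2

namespace Torus2

def mk (v : ℝ × ℝ) : Torus2 := ((v.1 : AddCircle (1 : ℝ)), (v.2 : AddCircle (1 : ℝ)))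

theorem mk_surjective : Function.Surjective mk := fun z =>
  let ⟨a, ha⟩ := QuotientAddGroup.mk_surjective z.1
  let ⟨b, hb⟩ := QuotientAddGroup.mk_surjective z.2
  ⟨(a, b), Prod.ext ha hb⟩

theorem mk_sub (v w : ℝ × ℝ) : mk (v - w) = mk v - mk w :=
  Prod.ext (AddCircle.coe_sub _ v.1 w.1) (AddCircle.coe_sub _ v.2 w.2)

end Torus2

theorem AddCircle.coe_eq_zero_iff_exists_int (r : ℝ) :
    (r : AddCircle (1 : ℝ)) = 0 ↔ ∃ n : ℤ, r = n := by
  rw [AddCircle.coe_eq_zero_iff]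
  simp [eq_comm]

theorem AddCircle.coe_eq_coe_iff_exists_int (a b : ℝ) :
    (a : AddCircle (1 : ℝ)) = b ↔ ∃ n : ℤ, a - b = n := by
  rw [← sub_eq_zero, ← AddCircle.coe_sub, coe_eq_zero_iff_exists_int]

theorem slopeCondT_mk_iff (c : Fin 3) (v : ℝ × ℝ) :
    slopeCondT c (Torus2.mk v) ↔ ∃ p : ℤ × ℤ, slopeCondR c (v + ((p.1 : ℝ), (p.2 : ℝ))) := by
  fin_cases c
  · simp only [slopeCondT, slopeCondR, Torus2.mk, AddCircle.coe_eq_zero_iff_exists_int]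
    constructor
    · rintro ⟨n, hn⟩
      exact ⟨(0, -n), by simp [hn]⟩
    · rintro ⟨p, hp⟩
      exact ⟨-p.2, by simp only [Prod.snd_add] at hp; push_cast; linarith⟩
  · simp only [slopeCondT, slopeCondR, Torus2.mk, AddCircle.coe_eq_zero_iff_exists_int]
    constructor
    · rintro ⟨n, hn⟩
      exact ⟨(-n, 0), by simp [hn]⟩
    · rintro ⟨p, hp⟩
      exact ⟨-p.1, by simp only [Prod.fst_add] at hp; push_cast; linarith⟩
  · simp only [slopeCondT, slopeCondR, Torus2.mk, AddCircle.coe_eq_coe_iff_exists_int]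
    constructor
    · rintro ⟨n, hn⟩
      exact ⟨(0, n), by simp only [Prod.fst_add, Prod.snd_add]; push_cast; linarith⟩
    · rintro ⟨p, hp⟩
      exact ⟨p.2 - p.1, by simp only [Prod.fst_add, Prod.snd_add] at hp; push_cast; linarith⟩

theorem torus_slope_iff_integral_lift_general {V E : Type*}
    (s t : E → V) (col : E → Fin 3) (φ : V → Torus2)
    (x : E → Torus2) (hx : ∀ e : E, x e = φ (t e) - φ (s e)) :
    (∀ e : E, slopeCondT (col e) (x e)) ↔
      (∃ (X : V → ℝ × ℝ) (ρ : E → ℤ × ℤ),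
        (∀ e : E, x e =
          ((↑((X (t e)).1 - (X (s e)).1) : AddCircle (1 : ℝ)),
           (↑((X (t e)).2 - (X (s e)).2) : AddCircle (1 : ℝ)))) ∧
        (∀ e : E, slopeCondR (col e)
          (X (t e) - X (s e) + (((ρ e).1 : ℝ), ((ρ e).2 : ℝ))))) := by
  constructor
  · intro hS
    choose X hX using fun v => Torus2.mk_surjective (φ v)
    have hlift : ∀ e, x e = Torus2.mk (X (t e) - X (s e)) := fun e => by
      rw [hx e, Torus2.mk_sub, hX, hX]
    choose ρ hρ using fun e => (slopeCondT_mk_iff (col e) _).mp (hlift e ▸ hS e)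
    exact ⟨X, ρ, hlift, hρ⟩
  · rintro ⟨X, ρ, hlift, hslope⟩ e
    rw [hlift e]
    exact (slopeCondT_mk_iff (col e) (X (t e) - X (s e))).mpr ⟨ρ e, hslope e⟩

/-- An exact T²-valued 1-cochain x = d_{T²}φ on a Tait-colored graph satisfies the
slope conditions S iff some exact real lift x̃ ∈ Im(d_ℝ) of a representative, corrected
by an integral 1-cochain ρ ∈ C¹(Γ,ℤ²), lies in the linear slope subspace S̃ ⊆ C¹(Γ,ℝ²). -/
theorem torus_slope_iff_integral_lift {V E : Type*} [Fintype V] [Fintype E]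
    (s t : E → V) (col : E → Fin 3) (φ : V → Torus2)
    (x : E → Torus2) (hx : ∀ e : E, x e = φ (t e) - φ (s e)) :
    (∀ e : E, slopeCondT (col e) (x e)) ↔
      (∃ (X : V → ℝ × ℝ) (ρ : E → ℤ × ℤ),
        (∀ e : E, x e =
          ((↑((X (t e)).1 - (X (s e)).1) : AddCircle (1 : ℝ)),
           (↑((X (t e)).2 - (X (s e)).2) : AddCircle (1 : ℝ)))) ∧
        (∀ e : E, slopeCondR (col e)
          (X (t e) - X (s e) + (((ρ e).1 : ℝ), ((ρ e).2 : ℝ))))) :=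
  torus_slope_iff_integral_lift_general s t col φ x hx
end

section
/- For the Tait-colored graph K_{3,3} (with b = 3), the configuration φ: V(K_{3,3}) → T^2 can be chosen injectively satisfying all slope conditions: there exist 6 pairwise distinct points in T^2 realizing the red edges as vertical segments, blue edges as horizontal segments, and green edges as slope −1 segments, matching the unique Tait coloring of K_{3,3}; hence the moduli space M(K_{3,3}) is nonempty. -/
/-- Red edges of the Tait-colored K₃,₃ (vertices 0,1,2 = u₁,u₂,u₃ and 3,4,5 = w₁,w₂,w₃):
the edges {uₖ, wₖ}. -/
def K33red (i j : Fin 6) : Prop :=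
  ∃ k : Fin 3, (i.val = k.val ∧ j.val = 3 + k.val) ∨ (j.val = k.val ∧ i.val = 3 + k.val)

/-- Blue edges of the Tait-colored K₃,₃: the edges {uₖ, w_{k+1}} (indices mod 3). -/
def K33blue (i j : Fin 6) : Prop :=
  ∃ k : Fin 3, (i.val = k.val ∧ j.val = 3 + (k.val + 1) % 3) ∨
    (j.val = k.val ∧ i.val = 3 + (k.val + 1) % 3)

/-- Green edges of the Tait-colored K₃,₃: the edges {uₖ, w_{k+2}} (indices mod 3). -/
def K33green (i j : Fin 6) : Prop :=
  ∃ k : Fin 3, (i.val = k.val ∧ j.val = 3 + (k.val + 2) % 3) ∨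
    (j.val = k.val ∧ i.val = 3 + (k.val + 2) % 3)

/-!
The six vertices fit on the subgrid (ℤ/3)² of the torus: put `uₖ = (k, k)` and `wₖ = (k, k - 1)`.
Then `uₖ, wₖ` share the first coordinate, `uₖ, wₖ₊₁` the second and `uₖ, wₖ₊₂` the coordinate sum,
and no other pair shares any of them, a finite check. The injective homomorphism
`ZMod 3 →+ ℝ/ℤ`, `k ↦ k/3`, transports these coincidences to the torus unchanged.
-/

def IsTripleGridDiagram {V G : Type*} [Add G] (red blue green : V → V → Prop)
    (φ : V → G × G) : Prop :=
  Function.Injective φ ∧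
    (∀ i j, i ≠ j → ((φ i).1 = (φ j).1 ↔ red i j)) ∧
    (∀ i j, i ≠ j → ((φ i).2 = (φ j).2 ↔ blue i j)) ∧
    (∀ i j, i ≠ j → ((φ i).1 + (φ i).2 = (φ j).1 + (φ j).2 ↔ green i j))

theorem IsTripleGridDiagram.map {V A B : Type*} [Add A] [Add B]
    {red blue green : V → V → Prop} {φ : V → A × A}
    (hφ : IsTripleGridDiagram red blue green φ) {e : A →ₙ+ B} (he : Function.Injective e) :
    IsTripleGridDiagram red blue green (Prod.map e e ∘ φ) := by
  obtain ⟨hinj, hred, hblue, hgreen⟩ := hφ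
  refine ⟨(he.prodMap he).comp hinj, fun i j hij ↦ ?_, fun i j hij ↦ ?_, fun i j hij ↦ ?_⟩
  · simpa only [Function.comp_apply, Prod.map_fst, he.eq_iff] using hred i j hij
  · simpa only [Function.comp_apply, Prod.map_snd, he.eq_iff] using hblue i j hij
  · simpa only [Function.comp_apply, Prod.map_fst, Prod.map_snd, ← map_add, he.eq_iff]
      using hgreen i j hij

def k33GridZMod3 : Fin 6 → ZMod 3 × ZMod 3 :=
  ![(0, 0), (1, 1), (2, 2), (0, 2), (1, 0), (2, 1)]

theorem isTripleGridDiagram_k33GridZMod3 :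
    IsTripleGridDiagram K33red K33blue K33green k33GridZMod3 := by
  unfold IsTripleGridDiagram K33red K33blue K33green
  decide

/-- There is an injective map of the six vertices of the Tait-colored K₃,₃ into the
torus realizing red edges as vertical alignments, blue edges as horizontal alignments,
and green edges as slope −1 alignments: the moduli space 𝓜(K₃,₃) is nonempty. -/
theorem K33_moduli_nonempty :
    ∃ φ : Fin 6 → Torus2, Function.Injective φ ∧
      (∀ i j : Fin 6, i ≠ j → (((φ i).1 = (φ j).1) ↔ K33red i j)) ∧
      (∀ i j : Fin 6, i ≠ j → (((φ i).2 = (φ j).2) ↔ K33blue i j)) ∧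
      (∀ i j : Fin 6, i ≠ j →
        (((φ i).1 + (φ i).2 = (φ j).1 + (φ j).2) ↔ K33green i j)) :=
  ⟨_, isTripleGridDiagram_k33GridZMod3.map (e := (ZMod.toAddCircle (N := 3)).toAddHom)
    (ZMod.toAddCircle_injective 3)⟩
end
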